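/- arXiv:2007.04530 — 3 statements merged into one kernel-verified Lean document; each statement's English description precedes it below -/
import Mathlib

section
/- Let Y be a graph that is a generalized truncation. If Y has a unique isolating perfect matching M and for every two distinct components of Y \ M there is at least one edge of M joining them, then Y has a unique source, i.e., |src(Y)| = 1. -/
/-- A multigraph (possibly with loops and multiple edges): a vertex type,
an edge type, and an incidence map assigning to each edge its unordered pair of ends. -/
structure Multigraph where
  V : Type
  E : Type
  ends : E → Sym2 V

namespace Multigraph

/-- Two vertices are adjacent if some edge joins them. -/
def Adj (X : Multigraph) (u v : X.V) : Prop := ∃ e, X.ends e = s(u, v)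

/-- Reachability by walks. -/
def Reachable (X : Multigraph) : X.V → X.V → Prop := Relation.ReflTransGen X.Adj

/-- A multigraph is connected if every vertex reaches every other. -/
def Connected (X : Multigraph) : Prop := ∀ u v, X.Reachable u v

/-- No loops. -/
def Loopless (X : Multigraph) : Prop := ∀ e, ¬ (X.ends e).IsDiag

/-- Delete a set of edges. -/
def deleteEdges (X : Multigraph) (S : Set X.E) : Multigraph :=
  ⟨X.V, {e // e ∉ S}, fun e => X.ends e.1⟩

/-- A multigraph is a simple graph: no loops and no two parallel edges. -/
def IsSimple (X : Multigraph) : Prop :=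
  X.Loopless ∧ ∀ e f, X.ends e = X.ends f → e = f

/-- A perfect matching: a set of non-loop edges such that every vertex is
incident with exactly one edge of the set. -/
def IsPerfectMatching (X : Multigraph) (M : Set X.E) : Prop :=
  (∀ e ∈ M, ¬ (X.ends e).IsDiag) ∧ ∀ v : X.V, ∃! e, e ∈ M ∧ v ∈ X.ends e

/-- The valency of a vertex (loops would count once here; used for loopless graphs). -/
noncomputable def degree (X : Multigraph) (v : X.V) : ℕ∞ := {e | v ∈ X.ends e}.encard

/-- Data realizing `Y` as a generalized truncation of `X`:
`label` sends each vertex of `Y` to the vertex of `X` whose cluster contains it,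
`emb` sends each edge of `X` to the corresponding matching edge of `F(M)` in `Y`;
the matching edges form a perfect matching whose ends are labelled by the ends of the
original edge, all remaining (constituent) edges lie inside a single cluster, and the
constituents form a simple graph. -/
structure TruncationData (X Y : Multigraph) where
  label : Y.V → X.V
  emb : X.E → Y.E
  emb_inj : Function.Injective emb
  label_surj : Function.Surjective label
  ends_map : ∀ e, (Y.ends (emb e)).map label = X.ends e
  emb_ne : ∀ e, ¬ (Y.ends (emb e)).IsDiag
  matching : ∀ v : Y.V, ∃! e : X.E, v ∈ Y.ends (emb e)
  cluster : ∀ f : Y.E, f ∉ Set.range emb → ((Y.ends f).map label).IsDiag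
  simple : (Y.deleteEdges (Set.range emb)).IsSimple

/-- `Y` is a generalized truncation of `X`. -/
def IsGenTruncation (X Y : Multigraph) : Prop := Nonempty (X.TruncationData Y)

/-- Isomorphism of multigraphs. -/
structure Iso (X Y : Multigraph) where
  vEquiv : X.V ≃ Y.V
  eEquiv : X.E ≃ Y.E
  ends_map : ∀ e, (X.ends e).map vEquiv = Y.ends (eEquiv e)

/-- A truncation is complete if every constituent is a complete graph. -/
def TruncationData.Complete {X Y : Multigraph} (T : TruncationData X Y) : Prop :=
  ∀ x y : Y.V, x ≠ y → T.label x = T.label y →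
    ∃ f, f ∉ Set.range T.emb ∧ Y.ends f = s(x, y)

/-- A truncation is cohesive if every constituent is connected. -/
def TruncationData.Cohesive {X Y : Multigraph} (T : TruncationData X Y) : Prop :=
  ∀ v : X.V, ∀ x y : Y.V, T.label x = v → T.label y = v →
    Relation.ReflTransGen
      (fun a b => T.label a = v ∧ T.label b = v ∧
        ∃ f, f ∉ Set.range T.emb ∧ Y.ends f = s(a, b)) x y

/-- Walks in a multigraph, recording the edges used. -/
inductive Walk (X : Multigraph) : X.V → X.V → Type
  | nil (v : X.V) : Walk X v v
  | cons {u v w : X.V} (e : X.E) (h : X.ends e = s(u, v)) (p : Walk X v w) : Walk X u w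

/-- The list of edges of a walk. -/
def Walk.edges {X : Multigraph} : ∀ {u v : X.V}, X.Walk u v → List X.E
  | _, _, .nil _ => []
  | _, _, .cons e _ p => e :: p.edges

/-- The list of vertices of a walk (in order, with repetitions). -/
def Walk.support {X : Multigraph} : ∀ {u v : X.V}, X.Walk u v → List X.V
  | u, _, .nil _ => [u]
  | u, _, .cons _ _ p => u :: p.support

end Multigraph

/-
Labels of a truncation are constant on the components of `Y \ M`, where `M` is its set of
matching edges, and this `M` is an isolating perfect matching. So every source induces the
unique isolating matching. If moreover `M` joins any two components of `Y \ M`, two vertices with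
the same label cannot lie in different components, since the joining edge would be a loop of the
source. Hence the clusters of every source are exactly the components of `Y \ M`, and two sources
are identified through these components and the common edge set `M`.
-/

theorem Function.Surjective.exists_equiv_comp_eq_of_ker_eq {α β γ : Type*} {f : α → β}
    {g : α → γ} (hf : Function.Surjective f) (hg : Function.Surjective g)
    (hfg : ∀ x y, f x = f y ↔ g x = g y) : ∃ e : β ≃ γ, ∀ x, e (f x) = g x := by
  refine ⟨(Setoid.quotientKerEquivOfSurjective f hf).symm.trans
    ((Quotient.congrRight fun x y => by simp only [Setoid.ker_def, hfg]).trans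
      (Setoid.quotientKerEquivOfSurjective g hg)), fun x => ?_⟩
  have hx : (Setoid.quotientKerEquivOfSurjective f hf).symm (f x) = ⟦x⟧ :=
    (Equiv.symm_apply_eq _).2 rfl
  simp only [Equiv.trans_apply, hx]
  rfl

theorem Function.Injective.exists_equiv_comp_eq_of_range_eq {α β γ : Type*} {f : α → γ}
    {g : β → γ} (hf : Function.Injective f) (hg : Function.Injective g)
    (hfg : Set.range f = Set.range g) : ∃ e : α ≃ β, ∀ a, g (e a) = f a :=
  ⟨(Equiv.ofInjective f hf).trans ((Equiv.setCongr hfg).trans (Equiv.ofInjective g hg).symm),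
    fun _ => Equiv.apply_ofInjective_symm hg _⟩

namespace Multigraph

def IsIsolatingPerfectMatching (Y : Multigraph) (M : Set Y.E) : Prop :=
  Y.IsPerfectMatching M ∧
    ∀ e ∈ M, ∀ u v : Y.V, Y.ends e = s(u, v) → ¬ (Y.deleteEdges M).Reachable u v

def JoinsComponents (Y : Multigraph) (M : Set Y.E) : Prop :=
  ∀ u v : Y.V, ¬ (Y.deleteEdges M).Reachable u v →
    ∃ e ∈ M, ∃ x y : Y.V, Y.ends e = s(x, y) ∧
      (Y.deleteEdges M).Reachable u x ∧ (Y.deleteEdges M).Reachable v y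

namespace TruncationData

variable {X Y : Multigraph} (T : X.TruncationData Y)

theorem label_eq_of_reachable {x y : Y.V}
    (h : (Y.deleteEdges (Set.range T.emb)).Reachable x y) : T.label x = T.label y := by
  induction h with
  | refl => rfl
  | tail _ hadj ih =>
    obtain ⟨f, hf⟩ := hadj
    have hdiag := T.cluster f.1 f.2
    rw [show Y.ends f.1 = s(_, _) from hf, Sym2.map_mk, Sym2.mk_isDiag_iff] at hdiag
    exact ih.trans hdiag

theorem label_ne_of_ends_emb (hX : X.Loopless) {e : X.E} {a b : Y.V}
    (h : Y.ends (T.emb e) = s(a, b)) : T.label a ≠ T.label b := by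
  have hloop := hX e
  rwa [← T.ends_map e, h, Sym2.map_mk, Sym2.mk_isDiag_iff] at hloop

theorem isIsolatingPerfectMatching (hX : X.Loopless) :
    Y.IsIsolatingPerfectMatching (Set.range T.emb) := by
  refine ⟨⟨?_, fun v => ?_⟩, ?_⟩
  · rintro _ ⟨e, rfl⟩
    exact T.emb_ne e
  · obtain ⟨e, he, huniq⟩ := T.matching v
    refine ⟨T.emb e, ⟨⟨e, rfl⟩, he⟩, ?_⟩
    rintro _ ⟨⟨f, rfl⟩, hf⟩
    exact congrArg T.emb (huniq f hf)
  · rintro _ ⟨e, rfl⟩ u v h hreach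
    exact T.label_ne_of_ends_emb hX h (T.label_eq_of_reachable hreach)

theorem label_eq_iff_reachable (hX : X.Loopless) {M : Set Y.E} (hM : Set.range T.emb = M)
    (hjoin : Y.JoinsComponents M) {x y : Y.V} :
    T.label x = T.label y ↔ (Y.deleteEdges M).Reachable x y := by
  subst hM
  refine ⟨fun hxy => ?_, T.label_eq_of_reachable⟩
  by_contra hnr
  obtain ⟨_, ⟨e, rfl⟩, a, b, hab, hxa, hyb⟩ := hjoin x y hnr
  exact T.label_ne_of_ends_emb hX hab <|
    (T.label_eq_of_reachable hxa).symm.trans (hxy.trans (T.label_eq_of_reachable hyb))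

theorem nonempty_iso {X' : Multigraph} (T' : X'.TruncationData Y)
    (hemb : Set.range T.emb = Set.range T'.emb)
    (hlabel : ∀ x y, T.label x = T.label y ↔ T'.label x = T'.label y) : Nonempty (Iso X X') := by
  obtain ⟨φ, hφ⟩ := T.label_surj.exists_equiv_comp_eq_of_ker_eq T'.label_surj hlabel
  obtain ⟨ψ, hψ⟩ := T.emb_inj.exists_equiv_comp_eq_of_range_eq T'.emb_inj hemb
  refine ⟨⟨φ, ψ, fun e => ?_⟩⟩
  rw [← T.ends_map, ← T'.ends_map, hψ, Sym2.map_map]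
  exact congrArg (Sym2.map · _) (funext hφ)

end TruncationData

end Multigraph

open Multigraph in
theorem unique_source_of_unique_isolating_matching_general (Y : Multigraph)
    (M : Set Y.E)
    (huniqM : ∀ M' : Set Y.E,
      (Y.IsPerfectMatching M' ∧
        ∀ e ∈ M', ∀ u v : Y.V, Y.ends e = s(u, v) → ¬ (Y.deleteEdges M').Reachable u v) →
      M' = M)
    (hjoin : ∀ u v : Y.V, ¬ (Y.deleteEdges M).Reachable u v →
      ∃ e ∈ M, ∃ x y : Y.V, Y.ends e = s(x, y) ∧
        (Y.deleteEdges M).Reachable u x ∧ (Y.deleteEdges M).Reachable v y) :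
    ∀ X₁ X₂ : Multigraph, X₁.Loopless → IsGenTruncation X₁ Y →
      X₂.Loopless → IsGenTruncation X₂ Y → Nonempty (Iso X₁ X₂) := by
  rintro X₁ X₂ hX₁ ⟨T₁⟩ hX₂ ⟨T₂⟩
  have hM₁ : Set.range T₁.emb = M := huniqM _ (T₁.isIsolatingPerfectMatching hX₁)
  have hM₂ : Set.range T₂.emb = M := huniqM _ (T₂.isIsolatingPerfectMatching hX₂)
  refine T₁.nonempty_iso T₂ (hM₁.trans hM₂.symm) fun x y => ?_
  rw [T₁.label_eq_iff_reachable hX₁ hM₁ hjoin, T₂.label_eq_iff_reachable hX₂ hM₂ hjoin]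

open Multigraph in
/-- If a graph `Y` that is a generalized truncation has a unique isolating
perfect matching `M`, and every two distinct components of `Y \ M` are joined by at least
one edge of `M`, then `Y` has a unique source (up to isomorphism). -/
theorem unique_source_of_unique_isolating_matching (Y : Multigraph) (hY : Y.IsSimple)
    (hex : ∃ X : Multigraph, X.Loopless ∧ IsGenTruncation X Y)
    (M : Set Y.E)
    (hM : Y.IsPerfectMatching M ∧
      ∀ e ∈ M, ∀ u v : Y.V, Y.ends e = s(u, v) → ¬ (Y.deleteEdges M).Reachable u v)
    (huniqM : ∀ M' : Set Y.E,
      (Y.IsPerfectMatching M' ∧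
        ∀ e ∈ M', ∀ u v : Y.V, Y.ends e = s(u, v) → ¬ (Y.deleteEdges M').Reachable u v) →
      M' = M)
    (hjoin : ∀ u v : Y.V, ¬ (Y.deleteEdges M).Reachable u v →
      ∃ e ∈ M, ∃ x y : Y.V, Y.ends e = s(x, y) ∧
        (Y.deleteEdges M).Reachable u x ∧ (Y.deleteEdges M).Reachable v y) :
    ∀ X₁ X₂ : Multigraph, X₁.Loopless → IsGenTruncation X₁ Y →
      X₂.Loopless → IsGenTruncation X₂ Y → Nonempty (Iso X₁ X₂) :=
  unique_source_of_unique_isolating_matching_general Y M huniqM hjoin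
end

section
/- Let Y be a cohesive generalized truncation of a multigraph X. If E is an edge cut of Y consisting only of matching edges from F(M), then the set of edges of X corresponding to the edges of E is an edge cut of X. -/
namespace Multigraph

/-- An edge cut: a set of edges of a connected multigraph whose deletion disconnects it. -/
def IsEdgeCut (X : Multigraph) (S : Set X.E) : Prop :=
  X.Connected ∧ ¬ (X.deleteEdges S).Connected

end Multigraph

/-!
Deleting the cut edges never touches a constituent, so inside `Y - 𝓔` every cluster stays
connected. Hence walks in `Y` project to walks in `X` along `label` (constituent edges collapse to
a vertex), and conversely a walk in `X - emb⁻¹' 𝓔` lifts to `Y - 𝓔` by following its matching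
edges and crossing each cluster inside its constituent.
-/

theorem Relation.reflTransGen_of_reflTransGen_map {α β : Type*} {r : β → β → Prop}
    {p : α → α → Prop} (g : α → β) (hfib : ∀ x y, g x = g y → ReflTransGen p x y)
    (hlift : ∀ u v, r u v → ∃ a b, g a = u ∧ g b = v ∧ p a b) {x y : α}
    (h : ReflTransGen r (g x) (g y)) : ReflTransGen p x y := by
  suffices ∀ v, ReflTransGen r (g x) v → ∀ y, g y = v → ReflTransGen p x y from
    this _ h y rfl
  intro v hv
  induction hv with
  | refl => exact fun y hy => hfib x y hy.symm
  | tail _ hbc ih =>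
    intro y hy
    obtain ⟨a, b, rfl, rfl, hab⟩ := hlift _ _ hbc
    exact ((ih a rfl).tail hab).trans (hfib b y hy.symm)

namespace Multigraph

theorem Adj.symm {X : Multigraph} {u v : X.V} (h : X.Adj u v) : X.Adj v u := by
  obtain ⟨e, he⟩ := h
  exact ⟨e, he.trans Sym2.eq_swap⟩

namespace TruncationData

variable {X Y : Multigraph}

theorem ends_eq_of_ends_emb (T : TruncationData X Y) {e : X.E} {p q : Y.V}
    (h : Y.ends (T.emb e) = s(p, q)) :
    X.ends e = s(T.label p, T.label q) := by
  rw [← T.ends_map e, h, Sym2.map_mk]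

theorem reachable_label_of_adj (T : TruncationData X Y) {x y : Y.V} (h : Y.Adj x y) :
    X.Reachable (T.label x) (T.label y) := by
  obtain ⟨f, hf⟩ := h
  by_cases hr : f ∈ Set.range T.emb
  · obtain ⟨e, rfl⟩ := hr
    exact .single ⟨e, T.ends_eq_of_ends_emb hf⟩
  · have hdiag := T.cluster f hr
    rw [hf, Sym2.map_mk, Sym2.mk_isDiag_iff] at hdiag
    rw [hdiag]
    exact .refl

theorem reachable_label (T : TruncationData X Y) {x y : Y.V} (h : Y.Reachable x y) :
    X.Reachable (T.label x) (T.label y) :=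
  Relation.ReflTransGen.lift' T.label (fun _ _ => T.reachable_label_of_adj) _ _ h

theorem connected (T : TruncationData X Y) (hY : Y.Connected) : X.Connected := by
  intro u v
  obtain ⟨x, rfl⟩ := T.label_surj u
  obtain ⟨y, rfl⟩ := T.label_surj v
  exact T.reachable_label (hY x y)

theorem reachable_deleteEdges_of_label_eq (T : TruncationData X Y) (hcoh : T.Cohesive)
    {𝓔 : Set Y.E} (hsub : 𝓔 ⊆ Set.range T.emb) {x y : Y.V} (h : T.label x = T.label y) :
    (Y.deleteEdges 𝓔).Reachable x y := by
  refine Relation.ReflTransGen.mono ?_ _ _ (hcoh _ x y rfl h.symm)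
  rintro a b ⟨-, -, f, hf, hends⟩
  exact ⟨⟨f, fun h => hf (hsub h)⟩, hends⟩

theorem exists_adj_deleteEdges_of_adj (T : TruncationData X Y) {𝓔 : Set Y.E} {u v : X.V}
    (h : (X.deleteEdges (T.emb ⁻¹' 𝓔)).Adj u v) :
    ∃ p q, T.label p = u ∧ T.label q = v ∧ (Y.deleteEdges 𝓔).Adj p q := by
  obtain ⟨⟨e, he𝓔⟩, he⟩ := h
  induction hpq : Y.ends (T.emb e) using Sym2.inductionOn with
  | hf p q =>
    have hadj : (Y.deleteEdges 𝓔).Adj p q := ⟨⟨T.emb e, he𝓔⟩, hpq⟩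
    have hlabel : s(T.label p, T.label q) = s(u, v) :=
      (T.ends_eq_of_ends_emb hpq).symm.trans he
    rcases Sym2.eq_iff.mp hlabel with ⟨hp, hq⟩ | ⟨hp, hq⟩
    · exact ⟨p, q, hp, hq, hadj⟩
    · exact ⟨q, p, hq, hp, hadj.symm⟩

theorem connected_deleteEdges (T : TruncationData X Y) (hcoh : T.Cohesive) {𝓔 : Set Y.E}
    (hsub : 𝓔 ⊆ Set.range T.emb) (hX : (X.deleteEdges (T.emb ⁻¹' 𝓔)).Connected) :
    (Y.deleteEdges 𝓔).Connected := fun x y =>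
  Relation.reflTransGen_of_reflTransGen_map T.label
    (fun _ _ => T.reachable_deleteEdges_of_label_eq hcoh hsub)
    (fun _ _ => T.exists_adj_deleteEdges_of_adj) (hX (T.label x) (T.label y))

end TruncationData

end Multigraph

open Multigraph in
theorem edgeCut_of_matching_edgeCut_general (X Y : Multigraph)
    (T : TruncationData X Y) (hcoh : T.Cohesive)
    (𝓔 : Set Y.E) (hsub : 𝓔 ⊆ Set.range T.emb) (hcut : Y.IsEdgeCut 𝓔) :
    X.IsEdgeCut (T.emb ⁻¹' 𝓔) :=
  ⟨T.connected hcut.1, fun hX => hcut.2 (T.connected_deleteEdges hcoh hsub hX)⟩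

open Multigraph in
/-- Let `Y` be a cohesive generalized truncation of a multigraph `X`.
If `𝓔` is an edge cut of `Y` using only matching edges from `F(M)`, then the
corresponding edges of `X` form an edge cut of `X`. -/
theorem edgeCut_of_matching_edgeCut (X Y : Multigraph) (hX : X.Loopless)
    (T : TruncationData X Y) (hcoh : T.Cohesive)
    (𝓔 : Set Y.E) (hsub : 𝓔 ⊆ Set.range T.emb) (hcut : Y.IsEdgeCut 𝓔) :
    X.IsEdgeCut (T.emb ⁻¹' 𝓔) :=
  edgeCut_of_matching_edgeCut_general X Y T hcoh 𝓔 hsub hcut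
end

section
/- If X is a class I graph with maximum valency d, then the complete generalized truncation of X is also class I, i.e., has chromatic index d. -/
namespace Multigraph

/-- A proper edge coloring with `k` colors: distinct edges sharing a vertex receive
distinct colors. -/
def ProperEdgeColorable (Y : Multigraph) (k : ℕ) : Prop :=
  ∃ c : Y.E → Fin k, ∀ e f : Y.E, e ≠ f →
    (∃ v : Y.V, v ∈ Y.ends e ∧ v ∈ Y.ends f) → c e ≠ c f

/-- The chromatic index equals `k`. -/
def ChromaticIndexEq (Y : Multigraph) (k : ℕ) : Prop :=
  Y.ProperEdgeColorable k ∧ ∀ m : ℕ, Y.ProperEdgeColorable m → k ≤ m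

end Multigraph

/-!
Colour each vertex `v` of the truncation `Y` by the colour `φ v` that a `d`-edge-colouring of `X`
gives to the matching edge at `v`, and colour the edge `uv` of `Y` by `φ u + φ v` in `ℤ/d`.
Within a cluster the values `φ` are distinct, and the matching edge at `v` joins two vertices with
the same `φ`; so the edges at any vertex `w` receive `φ w + φ z` for pairwise distinct `φ z`,
which makes the colouring proper. Conversely a vertex of `Y` over a vertex of valency `d` in `X`
has valency at least `d` in the complete truncation, so `d` colours are necessary.
-/

namespace Multigraph

theorem Loopless.ne_of_ends_eq {Y : Multigraph} (hY : Y.Loopless) {e : Y.E} {u v : Y.V}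
    (h : Y.ends e = s(u, v)) : u ≠ v := by
  rintro rfl
  exact hY e (h ▸ Sym2.mk_isDiag_iff.mpr rfl)

theorem ProperEdgeColorable.degree_le {Y : Multigraph} {m : ℕ} (hY : Y.ProperEdgeColorable m)
    (v : Y.V) : Y.degree v ≤ m := by
  obtain ⟨c, hc⟩ := hY
  have hinj : Function.Injective fun e : {e | v ∈ Y.ends e} => c e := by
    intro e f hef
    by_contra hne
    exact hc e f (fun h => hne (Subtype.ext h)) ⟨v, e.2, f.2⟩ hef
  calc Y.degree v ≤ ENat.card (Fin m) := ENat.card_le_card_of_injective hinj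
    _ = m := by simp [ENat.card_eq_coe_fintype_card]

theorem properEdgeColorable_of_ne_on_opposite_ends {Y : Multigraph} {d : ℕ} (φ : Y.V → Fin d)
    (hφ : ∀ e f w z z', e ≠ f → Y.ends e = s(w, z) → Y.ends f = s(w, z') → φ z ≠ φ z') :
    Y.ProperEdgeColorable d := by
  refine ⟨fun e => Sym2.lift ⟨fun u v => φ u + φ v, fun u v => add_comm _ _⟩ (Y.ends e), ?_⟩
  rintro e f hef ⟨w, hwe, hwf⟩
  have : NeZero d := ⟨(φ w).pos.ne'⟩
  obtain ⟨z, hz⟩ := Sym2.mem_iff_exists.mp hwe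
  obtain ⟨z', hz'⟩ := Sym2.mem_iff_exists.mp hwf
  simp only [hz, hz', Sym2.lift_mk]
  exact fun h => hφ e f w z z' hef hz hz' (add_left_cancel h)

namespace TruncationData

variable {X Y : Multigraph}

theorem loopless (T : TruncationData X Y) : Y.Loopless := by
  intro f
  by_cases hf : f ∈ Set.range T.emb
  · obtain ⟨e, rfl⟩ := hf
    exact T.emb_ne e
  · exact T.simple.1 ⟨f, hf⟩

theorem label_eq_of_ends_eq (T : TruncationData X Y) {f : Y.E} (hf : f ∉ Set.range T.emb)
    {a b : Y.V} (h : Y.ends f = s(a, b)) : T.label a = T.label b := by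
  simpa [h] using T.cluster f hf

noncomputable def matchingEdge (T : TruncationData X Y) (v : Y.V) : X.E :=
  (T.matching v).exists.choose

theorem mem_ends_emb_matchingEdge (T : TruncationData X Y) (v : Y.V) :
    v ∈ Y.ends (T.emb (T.matchingEdge v)) :=
  (T.matching v).exists.choose_spec

theorem eq_matchingEdge_of_mem (T : TruncationData X Y) {v : Y.V} {e : X.E}
    (h : v ∈ Y.ends (T.emb e)) : e = T.matchingEdge v :=
  (T.matching v).unique h (T.mem_ends_emb_matchingEdge v)

theorem matchingEdge_eq_of_ends_emb (T : TruncationData X Y) {e : X.E} {w z : Y.V}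
    (h : Y.ends (T.emb e) = s(w, z)) : T.matchingEdge z = T.matchingEdge w := by
  rw [← T.eq_matchingEdge_of_mem (by simp [h] : z ∈ Y.ends (T.emb e)),
    ← T.eq_matchingEdge_of_mem (by simp [h] : w ∈ Y.ends (T.emb e))]

theorem label_mem_ends_matchingEdge (T : TruncationData X Y) (v : Y.V) :
    T.label v ∈ X.ends (T.matchingEdge v) := by
  rw [← T.ends_map]
  exact Sym2.mem_map.mpr ⟨v, T.mem_ends_emb_matchingEdge v, rfl⟩

theorem matchingEdge_ne_of_label_eq (T : TruncationData X Y) (hX : X.Loopless) {z z' : Y.V}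
    (hne : z ≠ z') (hlab : T.label z = T.label z') : T.matchingEdge z ≠ T.matchingEdge z' := by
  intro h
  have hends : Y.ends (T.emb (T.matchingEdge z)) = s(z, z') :=
    (Sym2.mem_and_mem_iff hne).mp
      ⟨T.mem_ends_emb_matchingEdge z, h ▸ T.mem_ends_emb_matchingEdge z'⟩
  apply hX (T.matchingEdge z)
  rw [← T.ends_map, hends, Sym2.map_mk, Sym2.mk_isDiag_iff]
  exact hlab

theorem properEdgeColorable (T : TruncationData X Y) (hX : X.Loopless) {d : ℕ}
    (hc : X.ProperEdgeColorable d) : Y.ProperEdgeColorable d := by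
  obtain ⟨c, hc⟩ := hc
  have hcluster : ∀ z z', z ≠ z' → T.label z = T.label z' →
      c (T.matchingEdge z) ≠ c (T.matchingEdge z') := fun z z' hne hlab =>
    hc _ _ (T.matchingEdge_ne_of_label_eq hX hne hlab)
      ⟨_, T.label_mem_ends_matchingEdge z, hlab ▸ T.label_mem_ends_matchingEdge z'⟩
  refine properEdgeColorable_of_ne_on_opposite_ends (fun v => c (T.matchingEdge v)) ?_
  intro e f w z z' hef he hf
  by_cases hme : e ∈ Set.range T.emb <;> by_cases hmf : f ∈ Set.range T.emb
  · obtain ⟨a, rfl⟩ := hme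
    obtain ⟨b, rfl⟩ := hmf
    have ha : a = T.matchingEdge w := T.eq_matchingEdge_of_mem (by simp [he])
    have hb : b = T.matchingEdge w := T.eq_matchingEdge_of_mem (by simp [hf])
    exact absurd (congrArg T.emb (ha.trans hb.symm)) hef
  · obtain ⟨a, rfl⟩ := hme
    rw [T.matchingEdge_eq_of_ends_emb he]
    exact hcluster w z' (T.loopless.ne_of_ends_eq hf) (T.label_eq_of_ends_eq hmf hf)
  · obtain ⟨b, rfl⟩ := hmf
    rw [T.matchingEdge_eq_of_ends_emb hf]
    exact (hcluster w z (T.loopless.ne_of_ends_eq he) (T.label_eq_of_ends_eq hme he)).symm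
  · refine hcluster z z' (fun hzz => hef ?_) ?_
    · exact congrArg Subtype.val (T.simple.2 ⟨e, hme⟩ ⟨f, hmf⟩ (he.trans (hzz ▸ hf.symm)))
    · exact (T.label_eq_of_ends_eq hme he).symm.trans (T.label_eq_of_ends_eq hmf hf)

variable {T : TruncationData X Y}

theorem exists_edge_toward (hcomp : T.Complete) {y : Y.V} {e : X.E}
    (he : T.label y ∈ X.ends e) : ∃ f u, Y.ends f = s(y, u) ∧ T.matchingEdge u = e := by
  rw [← T.ends_map] at he
  obtain ⟨u, hu, hlab⟩ := Sym2.mem_map.mp he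
  by_cases huy : u = y
  · subst huy
    exact ⟨T.emb e, Sym2.Mem.other hu, (Sym2.other_spec hu).symm,
      (T.eq_matchingEdge_of_mem (Sym2.other_mem hu)).symm⟩
  · obtain ⟨f, -, hf⟩ := hcomp y u (Ne.symm huy) hlab.symm
    exact ⟨f, u, hf, (T.eq_matchingEdge_of_mem hu).symm⟩

theorem degree_label_le (hcomp : T.Complete) (y : Y.V) : X.degree (T.label y) ≤ Y.degree y := by
  choose f u hf hu using fun (e : {e | T.label y ∈ X.ends e}) => exists_edge_toward hcomp e.2
  have hinj : Function.Injective fun e : {e | T.label y ∈ X.ends e} =>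
      (⟨f e, by simp [hf e]⟩ : {f | y ∈ Y.ends f}) := by
    intro e e' h
    have hfe : f e = f e' := congrArg Subtype.val h
    have huu : u e = u e' := Sym2.congr_right.mp ((hf e).symm.trans (hfe ▸ hf e'))
    exact Subtype.ext ((hu e).symm.trans (huu ▸ hu e'))
  exact ENat.card_le_card_of_injective hinj

end TruncationData

end Multigraph

open Multigraph in
theorem complete_truncation_classI_of_classI_general (X Y : Multigraph) (hX : X.IsSimple)
    (d : ℕ)
    (hattain : ∃ v : X.V, X.degree v = (d : ℕ∞))
    (hclassI : X.ProperEdgeColorable d)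
    (T : TruncationData X Y) (hcomp : T.Complete) :
    Y.ChromaticIndexEq d := by
  refine ⟨T.properEdgeColorable hX.1 hclassI, fun m hm => ?_⟩
  obtain ⟨x, hx⟩ := hattain
  obtain ⟨y, rfl⟩ := T.label_surj x
  have : (d : ℕ∞) ≤ m := hx ▸ (T.degree_label_le hcomp y).trans (hm.degree_le y)
  exact_mod_cast this

open Multigraph in
/-- If `X` is a class I graph with maximum valency `d`, then the complete
generalized truncation of `X` is also class I, i.e. has chromatic index `d`. -/
theorem complete_truncation_classI_of_classI (X Y : Multigraph) (hX : X.IsSimple)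
    (d : ℕ) (hmax : ∀ v : X.V, X.degree v ≤ (d : ℕ∞))
    (hattain : ∃ v : X.V, X.degree v = (d : ℕ∞))
    (hclassI : X.ProperEdgeColorable d)
    (T : TruncationData X Y) (hcomp : T.Complete) :
    Y.ChromaticIndexEq d :=
  complete_truncation_classI_of_classI_general X Y hX d hattain hclassI T hcomp
end
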